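/- arXiv:2101.09178 — 2 statements merged into one kernel-verified Lean document; each statement's English description precedes it below -/
import Mathlib

section
/- For any discrete random variable with n outcomes and probability vector p, and any outcome i, the Shannon entropy H(p) is at most h_b(p_i) + (1 - p_i) * log(n - 1), where h_b(q) = -q log q - (1-q) log(1-q) is the binary entropy function. -/
noncomputable def binEnt (q : ℝ) : ℝ := -q * Real.log q - (1 - q) * Real.log (1 - q)

/-!
Split off the outcome `i`: its term contributes `-pᵢ log pᵢ`, and the remaining mass `s = 1 - pᵢ`
is spread over `n - 1` outcomes, where by concavity of `x ↦ -x log x` (Jensen) the entropy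
contribution is largest for the uniform split, giving `-s log s + s log (n - 1)`.
-/

open Real Finset

lemma binEnt_eq_negMulLog (q : ℝ) : binEnt q = negMulLog q + negMulLog (1 - q) := by
  simp only [binEnt, negMulLog]
  ring

lemma negMulLog_div_natCast_mul {s : ℝ} {m : ℕ} (hm : m ≠ 0) :
    m * negMulLog (s / m) = negMulLog s + s * log m := by
  have hm' : (m : ℝ) ≠ 0 := Nat.cast_ne_zero.mpr hm
  rw [div_eq_mul_inv, negMulLog_mul]
  simp only [negMulLog, log_inv]
  field_simp

theorem sum_negMulLog_le {ι : Type*} (t : Finset ι) (f : ι → ℝ) (hf : ∀ j ∈ t, 0 ≤ f j) :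
    ∑ j ∈ t, negMulLog (f j) ≤ negMulLog (∑ j ∈ t, f j) + (∑ j ∈ t, f j) * log #t := by
  rcases t.eq_empty_or_nonempty with rfl | ht
  · simp
  have hm : (#t : ℝ) ≠ 0 := Nat.cast_ne_zero.mpr ht.card_ne_zero
  have jensen : ∑ j ∈ t, (#t : ℝ)⁻¹ • negMulLog (f j)
      ≤ negMulLog (∑ j ∈ t, (#t : ℝ)⁻¹ • f j) :=
    concaveOn_negMulLog.le_map_sum (fun _ _ => by positivity)
      (by simp [hm]) (fun j hj => Set.mem_Ici.mpr (hf j hj))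
  simp only [smul_eq_mul, inv_mul_eq_div, ← sum_div] at jensen
  rw [← negMulLog_div_natCast_mul ht.card_ne_zero]
  rwa [div_le_iff₀ (by positivity), mul_comm] at jensen

theorem stmt_0_general (n : ℕ) (p : Fin n → ℝ)
    (hp0 : ∀ j, 0 ≤ p j) (hp1 : ∑ j, p j = 1) (i : Fin n) :
    (-∑ j, p j * Real.log (p j)) ≤ binEnt (p i) + (1 - p i) * Real.log (n - 1) := by
  have hrest : ∑ j ∈ univ.erase i, p j = 1 - p i := by
    rw [← hp1, ← add_sum_erase univ p (mem_univ i), add_sub_cancel_left]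
  have hcard : ((#(univ.erase i) : ℕ) : ℝ) = n - 1 := by
    rw [card_erase_of_mem (mem_univ i), card_univ, Fintype.card_fin,
      Nat.cast_sub i.pos, Nat.cast_one]
  calc -∑ j, p j * log (p j)
      = negMulLog (p i) + ∑ j ∈ univ.erase i, negMulLog (p j) := by
        simp only [negMulLog, neg_mul, sum_neg_distrib, ← add_sum_erase univ _ (mem_univ i)]
        ring
    _ ≤ negMulLog (p i) + (negMulLog (1 - p i) + (1 - p i) * log (n - 1)) := by
        grw [sum_negMulLog_le _ _ fun j _ => hp0 j, hrest, hcard]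
    _ = binEnt (p i) + (1 - p i) * log (n - 1) := by
        rw [binEnt_eq_negMulLog]
        ring

/-- Entropy upper bound: H(p) ≤ h_b(p_i) + (1 - p_i) log (n-1). -/
theorem stmt_0 (n : ℕ) (hn : 2 ≤ n) (p : Fin n → ℝ)
    (hp0 : ∀ j, 0 ≤ p j) (hp1 : ∑ j, p j = 1) (i : Fin n) :
    (-∑ j, p j * Real.log (p j)) ≤ binEnt (p i) + (1 - p i) * Real.log (n - 1) :=
  stmt_0_general n p hp0 hp1 i
end

section
/- In the single-population infinite-α α-rank chain on 4 strategies {G1, G2, B1, B2} for the '2 Good, 2 Bad' game, with perturbation ε → 0, the stationary distribution converges to (0, 1, 0, 0), i.e., all mass concentrates on G2. -/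
/-!
The stationarity equations can be solved in closed form: for `0 ≤ ε < 1` the two bad
strategies carry equal mass, the good ones carry `1 - ε` in total, and `G1` carries `2ε`
times the mass of `G2`. Hence the only stationary distribution is
`(2ε(1-ε)/(1+2ε), (1-ε)/(1+2ε), ε/2, ε/2)`, which is continuous at `ε = 0` with value
`(0, 1, 0, 0)`.
-/

open Finset

/-- Transition matrix of the single-population infinite-α α-rank chain for the
'2 Good, 2 Bad' game, with perturbation ε; strategies ordered (G1, G2, B1, B2). -/
noncomputable def goodBadC (ε : ℝ) : Matrix (Fin 4) (Fin 4) ℝ :=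
  !![(2 - ε)/3, (1 - ε)/3, ε/3,       ε/3;
     ε/3,       1 - ε,     ε/3,       ε/3;
     (1 - ε)/3, (1 - ε)/3, (1 + 4*ε)/6, 1/6;
     (1 - ε)/3, (1 - ε)/3, 1/6,       (1 + 4*ε)/6]

open Filter Topology Matrix

noncomputable def goodBadStationary (ε : ℝ) : Fin 4 → ℝ :=
  ![2 * ε * (1 - ε) / (1 + 2 * ε), (1 - ε) / (1 + 2 * ε), ε / 2, ε / 2]

theorem eq_goodBadStationary_of_vecMul_eq {ε : ℝ} (hε0 : 0 ≤ ε) (hε1 : ε < 1)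
    {r : Fin 4 → ℝ} (hsum : ∑ i, r i = 1) (hstat : r ᵥ* goodBadC ε = r) :
    r = goodBadStationary ε := by
  have h0 := congrFun hstat 0
  have h2 := congrFun hstat 2
  have h3 := congrFun hstat 3
  simp only [vecMul, dotProduct, goodBadC, Fin.sum_univ_four, of_apply, cons_val', cons_val_zero,
    cons_val_one, cons_val_two, cons_val_three, empty_val', cons_val_fin_one, vecHead,
    tail_cons] at h0 h2 h3
  rw [Fin.sum_univ_four] at hsum
  have hbad : r 2 = r 3 := by
    have : (r 2 - r 3) * (2 * ε - 3) = 0 := by linear_combination 3 * (h2 - h3)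
    exact sub_eq_zero.1 ((mul_eq_zero.1 this).resolve_right (by linarith))
  have hgood : r 0 + r 1 = 1 - ε := by
    linear_combination (1 - ε) * hsum + 3 * h2 + (3 / 2 - ε) * hbad
  have hG1 : r 0 = 2 * ε * r 1 := by
    linear_combination (-3) * h0 - 3 * h2 + (ε - 3 / 2) * hbad
  have hG2 : r 1 = (1 - ε) / (1 + 2 * ε) := by
    rw [eq_div_iff (by positivity)]
    linear_combination hgood - hG1
  have hB1 : r 2 = ε / 2 := by linarith
  funext i
  fin_cases i
  · show r 0 = 2 * ε * (1 - ε) / (1 + 2 * ε)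
    rw [hG1, hG2]
    ring
  · exact hG2
  · exact hB1
  · show r 3 = ε / 2
    rw [← hbad, hB1]

theorem continuousAt_goodBadStationary_zero : ContinuousAt goodBadStationary 0 := by
  unfold goodBadStationary
  fun_prop (disch := norm_num)

theorem goodBadStationary_zero : goodBadStationary 0 = fun i => if i = 1 then 1 else 0 := by
  funext i
  fin_cases i <;> simp [goodBadStationary]

/-- Any family r(ε) of stationary distributions of the '2 Good, 2 Bad' chain converges
to (0,1,0,0) as ε → 0⁺: all mass concentrates on G2. -/
theorem stmt_15 (r : ℝ → Fin 4 → ℝ)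
    (hr : ∀ ε ∈ Set.Ioo (0:ℝ) (1/2),
      (∀ i, 0 ≤ r ε i) ∧ (∑ i, r ε i = 1) ∧
      (∀ τ, ∑ σ, r ε σ * goodBadC ε σ τ = r ε τ)) :
    Filter.Tendsto r (nhdsWithin 0 (Set.Ioi 0))
      (nhds (fun i => if i = 1 then 1 else 0)) := by
  have hr_eq : goodBadStationary =ᶠ[𝓝[>] 0] r := by
    filter_upwards [Ioo_mem_nhdsGT (by norm_num : (0 : ℝ) < 1 / 2)] with ε hε
    obtain ⟨-, hsum, hstat⟩ := hr ε hε
    exact (eq_goodBadStationary_of_vecMul_eq hε.1.le (by linarith [hε.2]) hsum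
      (funext hstat)).symm
  rw [← goodBadStationary_zero]
  exact (continuousAt_goodBadStationary_zero.tendsto.mono_left nhdsWithin_le_nhds).congr' hr_eq
end
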